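/- arXiv:0906.4989 — 2 statements merged into one kernel-verified Lean document; each statement's English description precedes it below -/
import Mathlib

section
/- Let (X, σ_X) and (Y, σ_Y) be topologically mixing shifts of finite type, π : X → Y a factor map, α > 0, and φ_n(y) = log |π^{-1}[y_1⋯y_n]|^{1/(α+1)} with Φ = {φ_n}. For each n let ν_n be the Borel probability measure on Y with ν_n([i_1⋯i_n]) = |π^{-1}[i_1⋯i_n]|^{1/(α+1)}/S_n for every n-cylinder [i_1⋯i_n]. Then there exist constants C_1, C_2 > 0 such that for all l, n ∈ ℕ with l > n + M and all cylinders [i_1⋯i_n] in Y, C_1 ≤ ν_l([i_1⋯i_n]) / (e^{−nP(σ_Y,Φ)} |π^{-1}[i_1⋯i_n]|^{1/(α+1)}) ≤ C_2. -/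
set_option linter.unusedSectionVars false
set_option linter.unusedVariables false
set_option maxHeartbeats 1000000

open MeasureTheory Filter Topology Set
open scoped ENNReal NNReal Classical

namespace Paper

/-- The shift map on the full sequence space over the alphabet `A`. -/
def shiftF (A : Type*) : (ℕ → A) → (ℕ → A) := fun x i => x (i + 1)

/-- A (one-sided) subshift over the alphabet `A`: a closed shift-invariant set of sequences. -/
structure Subshift (A : Type*) [TopologicalSpace A] : Type _ where
  carrier : Set (ℕ → A)
  isClosed : IsClosed carrier
  shift_mem : ∀ x ∈ carrier, shiftF A x ∈ carrier

section Defs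

variable {A B : Type*}
  [Fintype A] [TopologicalSpace A] [DiscreteTopology A]
  [MeasurableSpace A] [MeasurableSingletonClass A]
  [Fintype B] [TopologicalSpace B] [DiscreteTopology B]
  [MeasurableSpace B] [MeasurableSingletonClass B]

/-- The points of a subshift, as a subtype of the full sequence space. -/
abbrev Subshift.pt (X : Subshift A) : Type _ := ↥X.carrier

/-- The shift map of a subshift. -/
def Subshift.σ (X : Subshift A) : X.pt → X.pt :=
  fun x => ⟨shiftF A x.1, X.shift_mem x.1 x.2⟩

/-- `M(X, σ_X)`: the set of shift-invariant Borel probability measures on the subshift. -/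
def invP (X : Subshift A) : Set (ProbabilityMeasure X.pt) :=
  {μ | μ.toMeasure.map X.σ = μ.toMeasure}

/-- The cylinder set `[w₁ ⋯ wₙ]` of a word, inside the subshift. -/
def cyl (X : Subshift A) {n : ℕ} (w : Fin n → A) : Set X.pt :=
  {x | ∀ i : Fin n, x.1 (i : ℕ) = w i}

/-- The entropy of the partition of `X` into cylinders of length `n` w.r.t. `μ`. -/
noncomputable def blockH (X : Subshift A) (μ : ProbabilityMeasure X.pt) (n : ℕ) : ℝ :=
  ∑ w : Fin n → A, Real.negMulLog ((μ.toMeasure (cyl X w)).toReal)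

/-- The Kolmogorov–Sinai entropy `h_μ(σ_X)` of an invariant measure on a subshift: for
invariant measures the sequence `blockH` is subadditive, so the infimum below is the
usual limit `lim (1/n) H_n` over the generating sequence of cylinder partitions. -/
noncomputable def KS (X : Subshift A) (μ : ProbabilityMeasure X.pt) : ℝ :=
  ⨅ n : ℕ, blockH X μ (n + 1) / (n + 1)

/-- A one-block factor map between subshifts, given by a map on symbols. -/
structure Factor (X : Subshift A) (Y : Subshift B) where
  symb : A → B
  mem : ∀ x ∈ X.carrier, (fun i => symb (x i)) ∈ Y.carrier
  surj : ∀ y ∈ Y.carrier, ∃ x ∈ X.carrier, (fun i => symb (x i)) = y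

variable {X : Subshift A} {Y : Subshift B}

/-- The factor map `π : X → Y` induced by the one-block map on symbols. -/
def Factor.map (π : Factor X Y) : X.pt → Y.pt :=
  fun x => ⟨fun i => π.symb (x.1 i), π.mem x.1 x.2⟩

lemma Factor.measurable_map (π : Factor X Y) : Measurable π.map := by
  apply Measurable.subtype_mk
  apply measurable_pi_lambda
  intro i
  exact (measurable_of_countable π.symb).comp
    ((measurable_pi_apply i).comp measurable_subtype_coe)

/-- Push-forward `π μ` of a probability measure under the factor map. -/
noncomputable def Factor.push (π : Factor X Y) (μ : ProbabilityMeasure X.pt) :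
    ProbabilityMeasure Y.pt :=
  μ.map π.measurable_map.aemeasurable

/-- A word is allowable in `X` if it occurs (initially) in some point of `X`. -/
def allowW (X : Subshift A) {n : ℕ} (w : Fin n → A) : Prop :=
  ∃ x ∈ X.carrier, ∀ i : Fin n, x (i : ℕ) = w i

/-- `|π⁻¹[v₁⋯vₙ]|`: the number of allowable `n`-words of `X` mapped by the one-block map
to the word `v`. -/
noncomputable def preCnt (π : Factor X Y) {n : ℕ} (v : Fin n → B) : ℕ :=
  Nat.card {w : Fin n → A // allowW X w ∧ ∀ i, π.symb (w i) = v i}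

/-- `|D_n(y)|`: the number of length-`n` cylinders of `X` meeting the fiber `π⁻¹(y)`. -/
noncomputable def Dcnt (π : Factor X Y) (n : ℕ) (y : Y.pt) : ℕ :=
  Nat.card {w : Fin n → A // ∃ x : X.pt, π.map x = y ∧ ∀ i : Fin n, x.1 (i : ℕ) = w i}

/-- The relative pressure function `P(σ_X, π, 0)(y) = limsup (1/n) log |D_n(y)|`. -/
noncomputable def relP (π : Factor X Y) (y : Y.pt) : ℝ :=
  Filter.limsup (fun n : ℕ => Real.log (Dcnt π n y) / n) Filter.atTop

/-- The function `y ↦ limsup (1/n) log |π⁻¹[y₁⋯yₙ]|`. -/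
noncomputable def relP' (π : Factor X Y) (y : Y.pt) : ℝ :=
  Filter.limsup (fun n : ℕ => Real.log (preCnt π (fun i : Fin n => y.1 (i : ℕ))) / n)
    Filter.atTop

/-- `h_μ(σ) + ∫ f dμ`, as an extended real number. -/
noncomputable def wtF (X : Subshift A) (f : X.pt → ℝ) (μ : ProbabilityMeasure X.pt) : EReal :=
  (KS X μ : EReal) + ((∫ x, f x ∂μ.toMeasure : ℝ) : EReal)

/-- `lim (1/n) ∫ φ_n dμ` for a subadditive sequence `Φ`; for invariant `μ` the limit exists
in `[-∞, ∞)` and equals the infimum below, by subadditivity. -/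
noncomputable def potLim (X : Subshift A) (Φ : ℕ → X.pt → ℝ)
    (μ : ProbabilityMeasure X.pt) : EReal :=
  ⨅ n : ℕ, (((∫ x, Φ (n + 1) x ∂μ.toMeasure) / (n + 1) : ℝ) : EReal)

/-- `h_μ(σ) + ∫ f dμ + lim (1/n) ∫ φ_n dμ`. -/
noncomputable def wtFP (X : Subshift A) (f : X.pt → ℝ) (Φ : ℕ → X.pt → ℝ)
    (μ : ProbabilityMeasure X.pt) : EReal :=
  wtF X f μ + potLim X Φ μ

/-- `h_μ(σ) + lim (1/n) ∫ φ_n dμ`. -/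
noncomputable def wtP (X : Subshift A) (Φ : ℕ → X.pt → ℝ)
    (μ : ProbabilityMeasure X.pt) : EReal :=
  (KS X μ : EReal) + potLim X Φ μ

/-- `h_μ(σ) - lim (1/n) ∫ φ_n dμ`: the weight of the superadditive potential `-Φ`,
for `Φ` subadditive. -/
noncomputable def wtN (X : Subshift A) (Φ : ℕ → X.pt → ℝ)
    (μ : ProbabilityMeasure X.pt) : EReal :=
  (KS X μ : EReal) - potLim X Φ μ

/-- `M_f(X, σ_X)`: equilibrium states of a bounded Borel measurable function `f`. -/
def eqF (X : Subshift A) (f : X.pt → ℝ) : Set (ProbabilityMeasure X.pt) :=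
  {μ | μ ∈ invP X ∧ wtF X f μ = sSup (wtF X f '' invP X)}

/-- `M_{f+Φ}(X, σ_X)`: equilibrium states of `f + Φ`, `Φ` a subadditive potential. -/
def eqFP (X : Subshift A) (f : X.pt → ℝ) (Φ : ℕ → X.pt → ℝ) :
    Set (ProbabilityMeasure X.pt) :=
  {μ | μ ∈ invP X ∧ wtFP X f Φ μ = sSup (wtFP X f Φ '' invP X)}

/-- `M_Φ(X, σ_X)`: equilibrium states of a subadditive potential `Φ`. -/
def eqP (X : Subshift A) (Φ : ℕ → X.pt → ℝ) : Set (ProbabilityMeasure X.pt) :=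
  {μ | μ ∈ invP X ∧ wtP X Φ μ = sSup (wtP X Φ '' invP X)}

/-- `M_{-Φ}(X, σ_X)`: equilibrium states of `-Φ`, for `Φ` a subadditive potential. -/
def eqN (X : Subshift A) (Φ : ℕ → X.pt → ℝ) : Set (ProbabilityMeasure X.pt) :=
  {μ | μ ∈ invP X ∧ wtN X Φ μ = sSup (wtN X Φ '' invP X)}

/-- `μ` is a measure of maximal relative entropy over `m`. -/
def maxRelOver (π : Factor X Y) (m : ProbabilityMeasure Y.pt)
    (μ : ProbabilityMeasure X.pt) : Prop :=
  μ ∈ invP X ∧ π.push μ = m ∧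
    KS X μ = sSup (KS X '' {ν | ν ∈ invP X ∧ π.push ν = m})

/-- A subadditive potential: a sequence of continuous functions satisfying the
subadditivity condition (`Φ n` is the paper's `φ_n` for `n ≥ 1`). -/
def SubAdd (X : Subshift A) (Φ : ℕ → X.pt → ℝ) : Prop :=
  (∀ n : ℕ, 0 < n → Continuous (Φ n)) ∧
  ∀ n m : ℕ, 0 < n → 0 < m → ∀ x : X.pt, Φ (n + m) x ≤ Φ n x + Φ m (X.σ^[n] x)

/-- An almost additive potential. -/
def AlmostAdd (X : Subshift A) (Φ : ℕ → X.pt → ℝ) : Prop :=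
  (∀ n : ℕ, 0 < n → Continuous (Φ n)) ∧
  ∃ C : ℝ, 0 < C ∧ ∀ n m : ℕ, 0 < n → 0 < m → ∀ x : X.pt,
    -C + Φ n x + Φ m (X.σ^[n] x) ≤ Φ (n + m) x ∧
    Φ (n + m) x ≤ C + Φ n x + Φ m (X.σ^[n] x)

/-- The metric on the sequence space: `d(x,y) = (1/2)^k` where `k` is the first index at
which `x` and `y` differ, and `d(x,y) = 0` if `x = y`. -/
noncomputable def dSeq (x y : ℕ → A) : ℝ :=
  if x = y then 0 else (1 / 2 : ℝ) ^ sInf {n : ℕ | x n ≠ y n}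

/-- An `(n, ε)`-separated (finite) subset of the subshift. -/
def SepSet (Y : Subshift B) (n : ℕ) (ε : ℝ) (E : Finset Y.pt) : Prop :=
  ∀ x ∈ E, ∀ y ∈ E, x ≠ y → ∃ i < n, ε < dSeq ((Y.σ^[i] x) : Y.pt).1 ((Y.σ^[i] y) : Y.pt).1

/-- `P_n(σ_Y, Φ, ε)`: the supremum of `∑_{y ∈ E} exp (φ_n y)` over `(n,ε)`-separated
sets `E`. -/
noncomputable def PnV (Y : Subshift B) (Φ : ℕ → Y.pt → ℝ) (n : ℕ) (ε : ℝ) : ℝ :=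
  sSup {r : ℝ | ∃ E : Finset Y.pt, SepSet Y n ε E ∧ r = ∑ y ∈ E, Real.exp (Φ n y)}

/-- The subadditive topological pressure `P(σ_Y, Φ) = lim_{ε→0} limsup (1/n) log P_n(σ,Φ,ε)`;
since the inner quantity is monotone as `ε` decreases, the limit as `ε → 0⁺` is the
supremum over `ε > 0`. -/
noncomputable def Press (Y : Subshift B) (Φ : ℕ → Y.pt → ℝ) : EReal :=
  ⨆ (ε : ℝ) (_ : 0 < ε),
    Filter.limsup (fun n : ℕ => ((Real.log (PnV Y Φ n ε) / n : ℝ) : EReal)) Filter.atTop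

/-- `X` is a shift of finite type (a 1-step topological Markov shift). -/
def IsSFT (X : Subshift A) : Prop :=
  ∃ Tr : A → A → Prop, X.carrier = {x | ∀ i : ℕ, Tr (x i) (x (i + 1))}

/-- `X` is irreducible: any two allowable words can be joined by some connecting word. -/
def Irr (X : Subshift A) : Prop :=
  ∀ (m n : ℕ) (u : Fin m → A) (v : Fin n → A), allowW X u → allowW X v →
    ∃ (k : ℕ) (w : Fin k → A), allowW X (Fin.append (Fin.append u w) v)

/-- `X` is topologically mixing: any two allowable words can be joined by connecting words
of all sufficiently large lengths. -/
def Mix (X : Subshift A) : Prop :=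
  ∀ (m n : ℕ) (u : Fin m → A) (v : Fin n → A), allowW X u → allowW X v →
    ∃ N : ℕ, ∀ k ≥ N, ∃ w : Fin k → A, allowW X (Fin.append (Fin.append u w) v)

/-- `M` is a mixing gap for the SFT `X`: any two symbols occurring in `X` are joined by an
allowable word of length `M + 1` (this encodes `A^M > 0` for the transition matrix `A`). -/
def MixGap (X : Subshift A) (M : ℕ) : Prop :=
  ∀ a b : A, allowW X (fun _ : Fin 1 => a) → allowW X (fun _ : Fin 1 => b) →
    ∃ w : Fin (M + 1) → A, allowW X w ∧ w 0 = a ∧ w (Fin.last M) = b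

/-- A Gibbs measure for the sequence of potentials `Φ` on the subshift `Y`: there are
`C > 0` and `P` with `1/C < μ[y₁⋯yₙ] / exp(-nP + φ_n(y)) < C` for all `y` and `n ≥ 1`. -/
def IsGibbs (Y : Subshift B) (Φ : ℕ → Y.pt → ℝ) (μ : ProbabilityMeasure Y.pt) : Prop :=
  ∃ C : ℝ, 0 < C ∧ ∃ P : ℝ, ∀ n : ℕ, 0 < n → ∀ y : Y.pt,
    1 / C < (μ.toMeasure (cyl Y (fun i : Fin n => y.1 (i : ℕ)))).toReal /
        Real.exp (-(n : ℝ) * P + Φ n y) ∧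
      (μ.toMeasure (cyl Y (fun i : Fin n => y.1 (i : ℕ)))).toReal /
        Real.exp (-(n : ℝ) * P + Φ n y) < C

/-- A measure is mixing for the map `f`. -/
def MixingM {Ω : Type*} [MeasurableSpace Ω] (f : Ω → Ω) (μ : Measure Ω) : Prop :=
  ∀ s t : Set Ω, MeasurableSet s → MeasurableSet t →
    Filter.Tendsto (fun n : ℕ => (μ (s ∩ f^[n] ⁻¹' t)).toReal) Filter.atTop
      (nhds ((μ s).toReal * (μ t).toReal))

/-- The potential `φ_n(y) = log |π⁻¹[y₁⋯yₙ]|^{1/(α+1)}`. -/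
noncomputable def phiPre (π : Factor X Y) (α : ℝ) (n : ℕ) (y : Y.pt) : ℝ :=
  Real.log (((preCnt π (fun i : Fin n => y.1 (i : ℕ)) : ℝ)) ^ (1 / (α + 1) : ℝ))

/-- The potential `φ'_n(y) = log |D_n(y)|^{1/(α+1)}`. -/
noncomputable def phiD (π : Factor X Y) (α : ℝ) (n : ℕ) (y : Y.pt) : ℝ :=
  Real.log (((Dcnt π n y : ℝ)) ^ (1 / (α + 1) : ℝ))

/-- `S_n = ∑_{v ∈ B_n(Y)} |π⁻¹[v]|^{1/(α+1)}` (non-allowable words contribute `0` since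
then `|π⁻¹[v]| = 0`). -/
noncomputable def Sval (π : Factor X Y) (α : ℝ) (n : ℕ) : ℝ :=
  ∑ v : Fin n → B, ((preCnt π v : ℝ)) ^ (1 / (α + 1) : ℝ)

/-- `M_{-F∘π + Φ∘π}(X, σ_X)` for `F = P(σ_X, π, 0)` and `Φ` a subadditive potential
on `Y`. -/
noncomputable def compEq (π : Factor X Y) (Φ : ℕ → Y.pt → ℝ) :
    Set (ProbabilityMeasure X.pt) :=
  eqFP X (fun x => -relP π (π.map x)) (fun n x => Φ n (π.map x))

/-- The weighted entropy functional `h_μ(σ_X) + α h_{πμ}(σ_Y)`. -/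
noncomputable def wtAlpha (π : Factor X Y) (α : ℝ) (μ : ProbabilityMeasure X.pt) : EReal :=
  (KS X μ : EReal) + (α : EReal) * (KS Y (π.push μ) : EReal)

/-- `K_α`: the set of invariant measures maximizing `h_μ(σ_X) + α h_{πμ}(σ_Y)`. -/
noncomputable def Kalpha (π : Factor X Y) (α : ℝ) : Set (ProbabilityMeasure X.pt) :=
  {μ | μ ∈ invP X ∧ wtAlpha π α μ = sSup (wtAlpha π α '' invP X)}

end Defs

/-! ### The torus, the expanding map `T`, and carpets -/

/-- The two-torus. -/
abbrev T2 : Type := AddCircle (1 : ℝ) × AddCircle (1 : ℝ)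

/-- The endomorphism `T(x, y) = (l x mod 1, m y mod 1)` of the torus. -/
noncomputable def Tmap (l m : ℕ) : T2 → T2 := fun p => (l • p.1, m • p.2)

/-- The coding map `χ` associated to the Markov partition of `T`. -/
noncomputable def chi (l m : ℕ) (x : ℕ → Fin l × Fin m) : T2 :=
  (((∑' k : ℕ, (((x k).1 : ℕ) : ℝ) / l ^ (k + 1) : ℝ) : AddCircle (1:ℝ)),
   ((∑' k : ℕ, (((x k).2 : ℕ) : ℝ) / m ^ (k + 1) : ℝ) : AddCircle (1:ℝ)))

/-- The Hausdorff dimension of a measure: the infimum of the Hausdorff dimensions of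
sets of full measure. -/
noncomputable def dimHMeas {Ω : Type*} [EMetricSpace Ω] [MeasurableSpace Ω]
    (μ : Measure Ω) : ℝ≥0∞ :=
  ⨅ (s : Set Ω) (_ : μ s = 1), dimH s

/-- `μ` is a `T`-invariant ergodic Borel probability measure of full Hausdorff
dimension for the compact invariant set `K`. -/
def FullDimErg (l m : ℕ) (K : Set T2) (μ : Measure T2) : Prop :=
  IsProbabilityMeasure μ ∧ Ergodic (Tmap l m) μ ∧ μ K = 1 ∧ dimHMeas μ = dimH K

/-- The coding map restricted to a carpet subshift. -/
noncomputable def chiPt {l m : ℕ} (X : Subshift (Fin l × Fin m)) (x : X.pt) : T2 :=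
  chi l m x.1


/-!
Write `c(v) = |π⁻¹[v]|^θ` with `θ = 1/(α+1) ∈ (0,1]`. Cutting a preimage word in two gives
`c(uv) ≤ c(u) c(v)`. Conversely, in a one-step SFT with mixing gap `M` any preimages of `u` and
`v` can be joined by a connector of length `M`, so `|π⁻¹[u]| |π⁻¹[v]| ≤ ∑_{|t| = M} |π⁻¹[utv]|`,
and subadditivity of `x ↦ x^θ` gives `c(u) c(v) ≤ ∑_{|t| = M} c(utv)`. Summing over words,
`S_{n+m} ≤ S_n S_m` and `S_n S_m ≤ S_{n+M+m}`, whence `e^{kP} ≤ S_k ≤ e^{(k+M)P}` by Fekete-type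
arguments. Finally `ν_l[v] = ∑_u c(vu) / S_l` over the extensions `u` of length `l - n`, and the
same two inequalities squeeze this between `c(v) S_{l-n-M} / S_l` and `c(v) S_{l-n} / S_l`,
i.e. between `e^{-2MP}` and `e^{MP}` times `e^{-nP} c(v)`.
-/

end Paper

lemma Fintype.sum_fin_append {C M : Type*} [Fintype C] [AddCommMonoid M] {n m : ℕ}
    (F : (Fin (n + m) → C) → M) :
    ∑ w : Fin (n + m) → C, F w = ∑ u : Fin n → C, ∑ t : Fin m → C, F (Fin.append u t) := by
  rw [← Fintype.sum_prod_type']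
  exact (Fintype.sum_equiv (Fin.appendEquiv n m) _ _ fun _ => rfl).symm

lemma Real.rpow_sum_le_sum_rpow {ι : Type*} (s : Finset ι) {f : ι → ℝ}
    (hf : ∀ i ∈ s, 0 ≤ f i) {p : ℝ} (hp₀ : 0 < p) (hp₁ : p ≤ 1) :
    (∑ i ∈ s, f i) ^ p ≤ ∑ i ∈ s, f i ^ p :=
  Finset.le_sum_of_subadditive_on_pred (· ^ p) (0 ≤ ·) (Real.zero_rpow hp₀.ne').le
    (fun _ _ hx hy => Real.rpow_add_le_add_rpow hx hy hp₀.le hp₁)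
    (fun _ _ => add_nonneg) f hf

section Sequences

variable {u : ℕ → ℝ} {P : ℝ}

lemma Subadditive.mul_le_of_tendsto (hu : Subadditive u)
    (hP : Tendsto (fun n => u n / n) atTop (𝓝 P)) {k : ℕ} (hk : k ≠ 0) : k * P ≤ u k := by
  have hlim : P = hu.lim := tendsto_nhds_unique hP (hu.tendsto_lim hP.bddBelow_range)
  have h := hu.lim_le_div hP.bddBelow_range hk
  rwa [← hlim, le_div_iff₀ (by positivity), mul_comm] at h

lemma le_mul_of_tendsto_of_add_le_gap {G : ℕ}
    (hu : ∀ n m, 0 < n → 0 < m → u n + u m ≤ u (n + (G + m)))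
    (hP : Tendsto (fun n => u n / n) atTop (𝓝 P)) {k : ℕ} (hk : 0 < k) :
    u k ≤ (k + G) * P := by
  set N : ℕ → ℕ := fun j => k + j * (G + k)
  have hpow : ∀ j : ℕ, (j + 1) * u k ≤ u (N j) := by
    intro j
    induction j with
    | zero => simp [N]
    | succ j ih =>
      calc ((j + 1 : ℕ) + 1 : ℝ) * u k = (j + 1) * u k + u k := by push_cast; ring
        _ ≤ u (N j) + u k := by gcongr
        _ ≤ u (N (j + 1)) := by
          convert hu (N j) k (by positivity) hk using 2
          simp only [N]
          ring
  have hN : Tendsto N atTop atTop :=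
    tendsto_atTop_mono (fun j => le_add_left (Nat.le_mul_of_pos_right j (by omega))) tendsto_id
  have hratio : Tendsto (fun j : ℕ => (N j : ℝ) / (j + 1)) atTop (𝓝 (G + k)) := by
    have h := (tendsto_one_div_add_atTop_nhds_zero_nat.const_mul (G : ℝ)).const_sub
      ((G : ℝ) + k)
    rw [mul_zero, sub_zero] at h
    refine h.congr fun j => ?_
    simp only [N]
    push_cast
    field_simp
    ring
  have hlim : Tendsto (fun j : ℕ => u (N j) / (j + 1)) atTop (𝓝 (P * (G + k))) := by
    refine ((hP.comp hN).mul hratio).congr fun j => ?_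
    have : (N j : ℝ) ≠ 0 := by positivity
    simp only [Function.comp]
    field_simp
  calc u k ≤ P * (G + k) :=
        ge_of_tendsto' hlim fun j => by rw [le_div_iff₀ (by positivity)]; linarith [hpow j]
    _ = (k + G) * P := by ring

end Sequences

lemma Fin.append_inj_iff {α : Type*} {n m : ℕ} {u u' : Fin n → α} {v v' : Fin m → α} :
    Fin.append u v = Fin.append u' v' ↔ u = u' ∧ v = v' :=
  ⟨fun h => Prod.ext_iff.mp <| (Fin.appendEquiv n m).injective (a₁ := (u, v)) (a₂ := (u', v')) h,
    by rintro ⟨rfl, rfl⟩; rfl⟩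

namespace Paper

section Subshifts

variable {A : Type*} [TopologicalSpace A] {X : Subshift A}

lemma iterate_shiftF_apply (x : ℕ → A) (k i : ℕ) : (shiftF A)^[k] x i = x (i + k) := by
  induction k generalizing i with
  | zero => rfl
  | succ k ih =>
    rw [Function.iterate_succ_apply', shiftF, ih]
    ring_nf

lemma Subshift.iterate_shiftF_mem (X : Subshift A) {x : ℕ → A} (hx : x ∈ X.carrier) (k : ℕ) :
    (shiftF A)^[k] x ∈ X.carrier := by
  induction k with
  | zero => exact hx
  | succ k ih =>
    rw [Function.iterate_succ_apply']
    exact X.shift_mem _ ih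

lemma allowW_of_mem {x : ℕ → A} (hx : x ∈ X.carrier) (n : ℕ) :
    allowW X (fun i : Fin n => x i) :=
  ⟨x, hx, fun _ => rfl⟩

lemma allowW.castAdd {n m : ℕ} {w : Fin (n + m) → A} (h : allowW X w) :
    allowW X (fun i => w (Fin.castAdd m i)) := by
  obtain ⟨x, hx, hxw⟩ := h
  exact ⟨x, hx, fun i => hxw (Fin.castAdd m i)⟩

lemma allowW.natAdd {n m : ℕ} {w : Fin (n + m) → A} (h : allowW X w) :
    allowW X (fun i => w (Fin.natAdd n i)) := by
  obtain ⟨x, hx, hxw⟩ := h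
  refine ⟨_, X.iterate_shiftF_mem hx n, fun i => ?_⟩
  rw [iterate_shiftF_apply, add_comm]
  exact hxw (Fin.natAdd n i)

lemma allowW_single_of_mem {x : ℕ → A} (hx : x ∈ X.carrier) (k : ℕ) :
    allowW X (fun _ : Fin 1 => x k) :=
  ⟨_, X.iterate_shiftF_mem hx k, fun i => by simp [iterate_shiftF_apply, Fin.fin_one_eq_zero i]⟩

lemma IsSFT.splice_mem (hX : IsSFT X) {x y : ℕ → A} (hx : x ∈ X.carrier)
    (hy : y ∈ X.carrier) {k : ℕ} (hxy : x k = y 0) :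
    (fun i => if i < k then x i else y (i - k)) ∈ X.carrier := by
  obtain ⟨Tr, hTr⟩ := hX
  rw [hTr] at hx hy ⊢
  intro i
  rcases lt_trichotomy (i + 1) k with h | h | h
  · simpa [h, show i < k by omega] using hx i
  · simpa [h, show i < k by omega, ← hxy] using hx i
  · simpa [show ¬ i < k by omega, show ¬ i + 1 < k by omega,
      show i + 1 - k = i - k + 1 by omega] using hy (i - k)

lemma MixGap.succ (hX : IsSFT X) {M : ℕ} (hM : MixGap X M) : MixGap X (M + 1) := by
  intro a b ⟨x, hx, hxa⟩ hb
  obtain ⟨w, ⟨q, hq, hqw⟩, hw0, hwb⟩ := hM (x 1) b (allowW_single_of_mem hx 1) hb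
  refine ⟨_, allowW_of_mem (hX.splice_mem hx hq (k := 1) ?_) (M + 2), ?_, ?_⟩
  · simpa using ((hqw 0).trans hw0).symm
  · simpa using hxa 0
  · simpa [← hwb] using hqw (Fin.last M)

lemma IsSFT.exists_allowW_append (hX : IsSFT X) {G : ℕ} (hGap : MixGap X (G + 1))
    {n m : ℕ} (hn : 0 < n) (hm : 0 < m) {a : Fin n → A} {b : Fin m → A}
    (ha : allowW X a) (hb : allowW X b) :
    ∃ t : Fin G → A, allowW X (Fin.append a (Fin.append t b)) := by
  obtain ⟨x, hx, hxa⟩ := ha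
  obtain ⟨y, hy, hyb⟩ := hb
  obtain ⟨p, ⟨q, hq, hqp⟩, hp0, hpG⟩ :=
    hGap (x (n - 1)) (y 0) (allowW_single_of_mem hx (n - 1)) (allowW_single_of_mem hy 0)
  have hq0 : x (n - 1) = q 0 := by simpa [hp0] using (hqp 0).symm
  have hqG : q (G + 1) = y 0 := by simpa [hpG] using hqp (Fin.last (G + 1))
  have hz := hX.splice_mem hx hq hq0
  set z := fun i => if i < n - 1 then x i else q (i - (n - 1))
  have hz' := hX.splice_mem hz hy (k := n + G)
    (by simpa [z, show ¬ n + G < n - 1 by omega, show n + G - (n - 1) = G + 1 by omega] using hqG)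
  refine ⟨fun j => q (j + 1), _, hz', Fin.addCases (fun i => ?_) (Fin.addCases (fun j => ?_)
    (fun j => ?_))⟩
  · have hi := i.isLt
    simp only [Fin.val_castAdd, Fin.append_left, ← hxa, z, if_pos (show (i : ℕ) < n + G by omega)]
    split_ifs
    · rfl
    · rw [show (i : ℕ) - (n - 1) = 0 by omega, ← hq0, show n - 1 = (i : ℕ) by omega]
  · have hj := j.isLt
    simp [z, show n + (j : ℕ) < n + G by omega, show ¬ n + (j : ℕ) < n - 1 by omega,
      show n + (j : ℕ) - (n - 1) = j + 1 by omega]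
  · simp [← hyb, show n + (G + (j : ℕ)) - (n + G) = j by omega]

end Subshifts

section Counting

variable {A B : Type*} [TopologicalSpace A] [TopologicalSpace B] [Finite A]
  {X : Subshift A} {Y : Subshift B} (π : Factor X Y)

abbrev Factor.fiberW {n : ℕ} (v : Fin n → B) : Type _ :=
  {w : Fin n → A // allowW X w ∧ ∀ i, π.symb (w i) = v i}

lemma preCnt_pos {n : ℕ} {v : Fin n → B} (hv : allowW Y v) : 0 < preCnt π v := by
  obtain ⟨y, hy, hyv⟩ := hv
  obtain ⟨x, hx, rfl⟩ := π.surj y hy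
  have : Nonempty (π.fiberW v) := ⟨⟨_, allowW_of_mem hx n, hyv⟩⟩
  exact Nat.card_pos

lemma preCnt_append_le {n m : ℕ} (u : Fin n → B) (v : Fin m → B) :
    preCnt π (Fin.append u v) ≤ preCnt π u * preCnt π v := by
  rw [preCnt, preCnt, preCnt, ← Nat.card_prod]
  refine Nat.card_le_card_of_injective
    (fun w => (⟨_, w.2.1.castAdd, fun i => by simpa using w.2.2 (Fin.castAdd m i)⟩,
      ⟨_, w.2.1.natAdd, fun i => by simpa using w.2.2 (Fin.natAdd n i)⟩)) fun w w' h => ?_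
  rw [Prod.mk.injEq, Subtype.mk.injEq, Subtype.mk.injEq] at h
  rw [Subtype.ext_iff, ← Fin.append_castAdd_natAdd (f := w.1),
    ← Fin.append_castAdd_natAdd (f := w'.1), h.1, h.2]

lemma preCnt_mul_le_sum [Fintype B] (hX : IsSFT X) {G : ℕ} (hGap : MixGap X (G + 1)) {n m : ℕ}
    (hn : 0 < n) (hm : 0 < m) (v : Fin n → B) (v' : Fin m → B) :
    preCnt π v * preCnt π v' ≤ ∑ t : Fin G → B, preCnt π (Fin.append v (Fin.append t v')) := by
  choose t ht using fun (a : π.fiberW v) (b : π.fiberW v') =>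
    hX.exists_allowW_append hGap hn hm a.2.1 b.2.1
  rw [preCnt, preCnt, ← Nat.card_prod]
  refine le_of_le_of_eq (Nat.card_le_card_of_injective (β := Σ s : Fin G → B,
      π.fiberW (Fin.append v (Fin.append s v')))
    (fun ab => ⟨fun j => π.symb (t ab.1 ab.2 j), _, ht ab.1 ab.2, Fin.addCases
      (fun i => by simpa using ab.1.2.2 i)
      (Fin.addCases (fun j => by simp) fun j => by simpa using ab.2.2.2 j)⟩)
    fun ab ab' h => ?_) Nat.card_sigma
  have hw := congrArg (fun s => s.2.1) h
  simp only [Fin.append_inj_iff] at hw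
  exact Prod.ext (Subtype.ext hw.1) (Subtype.ext hw.2.2)

end Counting

section Cylinders

variable {B : Type*} [TopologicalSpace B] (Y : Subshift B)

lemma mem_cyl_append {n m : ℕ} {v : Fin n → B} {u : Fin m → B} {y : Y.pt} :
    y ∈ cyl Y (Fin.append v u) ↔ y ∈ cyl Y v ∧ ∀ j : Fin m, y.1 (n + j) = u j := by
  simp [cyl, Fin.forall_fin_add]

lemma cyl_eq_iUnion_append {n : ℕ} (v : Fin n → B) (m : ℕ) :
    cyl Y v = ⋃ u : Fin m → B, cyl Y (Fin.append v u) := by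
  ext y
  simp only [mem_iUnion, mem_cyl_append]
  exact ⟨fun h => ⟨fun j => y.1 (n + j), h, fun _ => rfl⟩, fun ⟨_, h, _⟩ => h⟩

lemma pairwise_disjoint_cyl_append {n : ℕ} (v : Fin n → B) (m : ℕ) :
    Pairwise (Function.onFun Disjoint fun u : Fin m → B => cyl Y (Fin.append v u)) := by
  intro u u' huu'
  refine Set.disjoint_left.mpr fun y hy hy' => huu' (funext fun j => ?_)
  rw [mem_cyl_append] at hy hy'
  rw [← hy.2 j, hy'.2 j]

variable [MeasurableSpace B] [MeasurableSingletonClass B]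

lemma measurableSet_cyl {n : ℕ} (v : Fin n → B) : MeasurableSet (cyl Y v) := by
  have : cyl Y v = ⋂ i : Fin n, (fun y : Y.pt => y.1 i) ⁻¹' {v i} := by
    ext
    simp [cyl]
  rw [this]
  exact .iInter fun i =>
    ((measurable_pi_apply _).comp measurable_subtype_coe) (measurableSet_singleton _)

lemma measure_cyl_eq_sum [Fintype B] (μ : Measure Y.pt) {n : ℕ} (v : Fin n → B) (m : ℕ) :
    μ (cyl Y v) = ∑ u : Fin m → B, μ (cyl Y (Fin.append v u)) := by
  rw [cyl_eq_iUnion_append Y v m, measure_iUnion (pairwise_disjoint_cyl_append Y v m)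
    fun u => measurableSet_cyl Y _, tsum_fintype]

end Cylinders

section Weights

variable {A B : Type*} [TopologicalSpace A] [TopologicalSpace B] [Finite A] [Fintype B]
  {X : Subshift A} {Y : Subshift B} (π : Factor X Y) {α : ℝ}

lemma sum_rpow_preCnt_append_le (hα : -1 ≤ α) {n : ℕ} (v : Fin n → B) (m : ℕ) :
    ∑ u : Fin m → B, (preCnt π (Fin.append v u) : ℝ) ^ (1 / (α + 1))
      ≤ (preCnt π v : ℝ) ^ (1 / (α + 1)) * Sval π α m := by
  have hθ : 0 ≤ 1 / (α + 1) := one_div_nonneg.mpr (by linarith)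
  rw [Sval, Finset.mul_sum]
  refine Finset.sum_le_sum fun u _ => ?_
  rw [← Real.mul_rpow (by positivity) (by positivity)]
  exact Real.rpow_le_rpow (by positivity) (by exact_mod_cast preCnt_append_le π v u) hθ

lemma Sval_add_le (hα : -1 ≤ α) (n m : ℕ) : Sval π α (n + m) ≤ Sval π α n * Sval π α m := by
  rw [Sval, Fintype.sum_fin_append, Sval, Finset.sum_mul]
  exact Finset.sum_le_sum fun v _ => sum_rpow_preCnt_append_le π hα v m

lemma rpow_preCnt_mul_Sval_le_sum (hX : IsSFT X) {G : ℕ} (hGap : MixGap X (G + 1))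
    (hα : 0 ≤ α) {n m : ℕ} (hn : 0 < n) (hm : 0 < m) (v : Fin n → B) :
    (preCnt π v : ℝ) ^ (1 / (α + 1)) * Sval π α m
      ≤ ∑ u : Fin (G + m) → B, (preCnt π (Fin.append v u) : ℝ) ^ (1 / (α + 1)) := by
  have hθ₀ : 0 < 1 / (α + 1) := by positivity
  have hθ₁ : 1 / (α + 1) ≤ 1 := by rw [div_le_one (by linarith)]; linarith
  rw [Fintype.sum_fin_append, Finset.sum_comm, Sval, Finset.mul_sum]
  refine Finset.sum_le_sum fun v' _ => ?_
  calc (preCnt π v : ℝ) ^ (1 / (α + 1)) * (preCnt π v' : ℝ) ^ (1 / (α + 1))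
      = ((preCnt π v * preCnt π v' : ℕ) : ℝ) ^ (1 / (α + 1)) := by
        push_cast
        exact (Real.mul_rpow (by positivity) (by positivity)).symm
    _ ≤ ((∑ t : Fin G → B, preCnt π (Fin.append v (Fin.append t v')) : ℕ) : ℝ) ^ (1 / (α + 1)) :=
        Real.rpow_le_rpow (by positivity)
          (by exact_mod_cast preCnt_mul_le_sum π hX hGap hn hm v v') hθ₀.le
    _ ≤ ∑ t : Fin G → B, (preCnt π (Fin.append v (Fin.append t v')) : ℝ) ^ (1 / (α + 1)) := by
        rw [Nat.cast_sum]
        exact Real.rpow_sum_le_sum_rpow _ (fun _ _ => by positivity) hθ₀ hθ₁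

lemma Sval_mul_le (hX : IsSFT X) {G : ℕ} (hGap : MixGap X (G + 1)) (hα : 0 ≤ α) {n m : ℕ}
    (hn : 0 < n) (hm : 0 < m) : Sval π α n * Sval π α m ≤ Sval π α (n + (G + m)) := by
  rw [Sval, Finset.sum_mul]
  conv_rhs => rw [Sval, Fintype.sum_fin_append]
  exact Finset.sum_le_sum fun v _ => rpow_preCnt_mul_Sval_le_sum π hX hGap hα hn hm v

lemma Sval_pos (hY : Nonempty Y.pt) (k : ℕ) : 0 < Sval π α k := by
  obtain ⟨y⟩ := hY
  exact Finset.sum_pos' (fun _ _ => by positivity) ⟨_, Finset.mem_univ _,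
    Real.rpow_pos_of_pos (by exact_mod_cast preCnt_pos π (allowW_of_mem y.2 k)) _⟩

variable {P : ℝ}

lemma exp_mul_le_Sval (hY : Nonempty Y.pt) (hα : -1 ≤ α)
    (hP : Tendsto (fun n : ℕ => Real.log (Sval π α n) / n) atTop (𝓝 P)) {k : ℕ} (hk : k ≠ 0) :
    Real.exp (k * P) ≤ Sval π α k := by
  have hsub : Subadditive fun n => Real.log (Sval π α n) := fun n m => by
    rw [← Real.log_mul (Sval_pos π hY n).ne' (Sval_pos π hY m).ne']
    exact Real.log_le_log (Sval_pos π hY _) (Sval_add_le π hα n m)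
  rw [← Real.le_log_iff_exp_le (Sval_pos π hY k)]
  exact Subadditive.mul_le_of_tendsto hsub hP hk

lemma Sval_le_exp (hX : IsSFT X) (hY : Nonempty Y.pt) {G : ℕ} (hGap : MixGap X (G + 1))
    (hα : 0 ≤ α) (hP : Tendsto (fun n : ℕ => Real.log (Sval π α n) / n) atTop (𝓝 P))
    {k : ℕ} (hk : 0 < k) : Sval π α k ≤ Real.exp ((k + G) * P) := by
  rw [← Real.log_le_iff_le_exp (Sval_pos π hY k)]
  refine le_mul_of_tendsto_of_add_le_gap (fun n m hn hm => ?_) hP hk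
  rw [← Real.log_mul (Sval_pos π hY n).ne' (Sval_pos π hY m).ne']
  exact Real.log_le_log (mul_pos (Sval_pos π hY n) (Sval_pos π hY m))
    (Sval_mul_le π hX hGap hα hn hm)

end Weights

theorem statement14_general
    {A B : Type*}
    [Fintype A] [TopologicalSpace A]
    [Fintype B] [TopologicalSpace B]
    [MeasurableSpace B] [MeasurableSingletonClass B]
    (X : Subshift A) (Y : Subshift B) (π : Factor X Y)
    (hXS : IsSFT X)
    (M : ℕ) (hM : MixGap X M)
    (α : ℝ) (hα : 0 < α)
    (P : ℝ)
    (hP : Filter.Tendsto (fun n : ℕ => Real.log (Sval π α n) / n) Filter.atTop (nhds P))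
    (ν : ℕ → ProbabilityMeasure Y.pt)
    (hν : ∀ n : ℕ, 0 < n → ∀ v : Fin n → B,
      ((ν n).toMeasure (cyl Y v)).toReal
        = (preCnt π v : ℝ) ^ (1 / (α + 1) : ℝ) / Sval π α n) :
    ∃ C₁ C₂ : ℝ, 0 < C₁ ∧ 0 < C₂ ∧
      ∀ l n : ℕ, 0 < n → n + M < l → ∀ v : Fin n → B, allowW Y v →
        C₁ ≤ ((ν l).toMeasure (cyl Y v)).toReal /
            (Real.exp (-(n : ℝ) * P) * (preCnt π v : ℝ) ^ (1 / (α + 1) : ℝ)) ∧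
        ((ν l).toMeasure (cyl Y v)).toReal /
            (Real.exp (-(n : ℝ) * P) * (preCnt π v : ℝ) ^ (1 / (α + 1) : ℝ)) ≤ C₂ := by
  refine ⟨Real.exp (-(2 * M) * P), Real.exp (M * P), Real.exp_pos _, Real.exp_pos _,
    fun l n hn hl v hv => ?_⟩
  obtain ⟨m, rfl⟩ : ∃ m, l = n + (M + (m + 1)) := ⟨l - n - M - 1, by omega⟩
  have hY : Nonempty Y.pt := let ⟨y, hy, _⟩ := hv; ⟨⟨y, hy⟩⟩
  have hGap := hM.succ hXS
  set c := (preCnt π v : ℝ) ^ (1 / (α + 1))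
  have hc : 0 < c := Real.rpow_pos_of_pos (by exact_mod_cast preCnt_pos π hv) _
  set extSum := ∑ u : Fin (M + (m + 1)) → B, (preCnt π (Fin.append v u) : ℝ) ^ (1 / (α + 1))
  have hνv : ((ν (n + (M + (m + 1)))).toMeasure (cyl Y v)).toReal = extSum / Sval π α (n + (M + (m + 1))) := by
    rw [measure_cyl_eq_sum Y _ v (M + (m + 1)),
      ENNReal.toReal_sum fun _ _ => measure_ne_top _ _, Finset.sum_div]
    exact Finset.sum_congr rfl fun u _ => hν _ (by omega) _
  have hexp : ∀ x y a b : ℝ, x + y = a - b →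
      Real.exp x * (Real.exp y * c) = c * Real.exp a / Real.exp b := by
    intro x y a b h
    rw [mul_div_assoc, ← Real.exp_sub, ← h, Real.exp_add]
    ring
  have hD : 0 < Real.exp (-(n : ℝ) * P) * c := by positivity
  constructor
  · rw [le_div_iff₀ hD, hνv]
    calc Real.exp (-(2 * M) * P) * (Real.exp (-n * P) * c)
        = c * Real.exp ((m + 1 : ℕ) * P) / Real.exp (((n + (M + (m + 1)) : ℕ) + M) * P) :=
          hexp _ _ _ _ (by push_cast; ring)
      _ ≤ extSum / Sval π α (n + (M + (m + 1))) :=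
          div_le_div₀ (by positivity)
            ((mul_le_mul_of_nonneg_left (exp_mul_le_Sval π hY (by linarith) hP (by omega))
              hc.le).trans (rpow_preCnt_mul_Sval_le_sum π hXS hGap hα.le hn (by omega) v))
            (Sval_pos π hY _) (Sval_le_exp π hXS hY hGap hα.le hP (by omega))
  · rw [div_le_iff₀ hD, hνv]
    calc extSum / Sval π α (n + (M + (m + 1)))
        ≤ c * Real.exp (((M + (m + 1) : ℕ) + M) * P) / Real.exp ((n + (M + (m + 1)) : ℕ) * P) :=
          div_le_div₀ (by positivity)
            ((sum_rpow_preCnt_append_le π (by linarith) v _).trans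
              (mul_le_mul_of_nonneg_left (Sval_le_exp π hXS hY hGap hα.le hP (by omega)) hc.le))
            (Real.exp_pos _) (exp_mul_le_Sval π hY (by linarith) hP (by omega))
      _ = Real.exp (M * P) * (Real.exp (-n * P) * c) :=
          (hexp _ _ _ _ (by push_cast; ring)).symm

/-- Lemma: uniform Gibbs-type bounds for the approximating measures
`ν_l`, which give mass `|π⁻¹[i₁⋯iₙ]|^{1/(α+1)}/S_n` to each `n`-cylinder, evaluated on
shorter cylinders `[i₁⋯iₙ]` with `l > n + M`. -/
theorem statement14
    {A B : Type*}
    [Fintype A] [TopologicalSpace A] [DiscreteTopology A]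
    [MeasurableSpace A] [MeasurableSingletonClass A]
    [Fintype B] [TopologicalSpace B] [DiscreteTopology B]
    [MeasurableSpace B] [MeasurableSingletonClass B]
    (X : Subshift A) (Y : Subshift B) (π : Factor X Y)
    (hXS : IsSFT X) (hYS : IsSFT Y) (hXM : Mix X) (hYM : Mix Y)
    (M : ℕ) (hM : MixGap X M)
    (α : ℝ) (hα : 0 < α)
    (P : ℝ)
    (hP : Filter.Tendsto (fun n : ℕ => Real.log (Sval π α n) / n) Filter.atTop (nhds P))
    (ν : ℕ → ProbabilityMeasure Y.pt)
    (hν : ∀ n : ℕ, 0 < n → ∀ v : Fin n → B,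
      ((ν n).toMeasure (cyl Y v)).toReal
        = (preCnt π v : ℝ) ^ (1 / (α + 1) : ℝ) / Sval π α n) :
    ∃ C₁ C₂ : ℝ, 0 < C₁ ∧ 0 < C₂ ∧
      ∀ l n : ℕ, 0 < n → n + M < l → ∀ v : Fin n → B, allowW Y v →
        C₁ ≤ ((ν l).toMeasure (cyl Y v)).toReal /
            (Real.exp (-(n : ℝ) * P) * (preCnt π v : ℝ) ^ (1 / (α + 1) : ℝ)) ∧
        ((ν l).toMeasure (cyl Y v)).toReal /
            (Real.exp (-(n : ℝ) * P) * (preCnt π v : ℝ) ^ (1 / (α + 1) : ℝ)) ≤ C₂ :=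
  statement14_general X Y π hXS M hM α hα P hP ν hν

end Paper
end

section
/- Let (X, σ_X) and (Y, σ_Y) be topologically mixing shifts of finite type, π : X → Y a factor map, and α > 0. Then for any fixed allowable words i_1⋯i_n and j_1⋯j_l in Y and any k > n + 2M, Σ_{i_1⋯i_n a_1⋯a_{k-n} j_1⋯j_l ∈ B_{k+l}(Y)} |π^{-1}[i_1⋯i_n a_1⋯a_{k-n} j_1⋯j_l]|^{1/(α+1)} ≥ (|π^{-1}[i_1⋯i_n]| · |π^{-1}[j_1⋯j_l]|)^{1/(α+1)} · Σ_{b_1⋯b_{k-n-2M} ∈ B_{k-n-2M}(Y)} |π^{-1}[b_1⋯b_{k-n-2M}]|^{1/(α+1)}. -/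
set_option linter.unusedSectionVars false
set_option linter.unusedVariables false
set_option maxHeartbeats 1000000

open MeasureTheory Filter Topology Set
open scoped ENNReal NNReal Classical

namespace Paper

/-! ### Auxiliary lemmas for `statement16` -/

section Aux16

theorem aux16_two_rpow (a b : ℝ) (p : ℝ) (ha : 0 ≤ a) (hb : 0 ≤ b) (hp : 0 ≤ p) (hp1 : p ≤ 1) :
    (a + b) ^ p ≤ a ^ p + b ^ p := by
  have := NNReal.rpow_add_le_add_rpow (⟨a, ha⟩ : ℝ≥0) (⟨b, hb⟩ : ℝ≥0) hp hp1
  have h2 := NNReal.coe_le_coe.2 this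
  push_cast [NNReal.coe_rpow] at h2
  exact h2

theorem aux16_sum_rpow {ι : Type*} (s : Finset ι) (f : ι → ℝ) (hf : ∀ i ∈ s, 0 ≤ f i) {r : ℝ}
    (hr0 : 0 < r) (hr1 : r ≤ 1) : (∑ i ∈ s, f i) ^ r ≤ ∑ i ∈ s, f i ^ r := by
  induction s using Finset.cons_induction with
  | empty => simp [Real.zero_rpow hr0.ne']
  | cons a s ha ih =>
    rw [Finset.sum_cons, Finset.sum_cons]
    have h1 : 0 ≤ f a := hf a (Finset.mem_cons_self a s)
    have h2 : ∀ i ∈ s, 0 ≤ f i := fun i hi => hf i (Finset.mem_cons.2 (Or.inr hi))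
    calc (f a + ∑ i ∈ s, f i) ^ r ≤ (f a) ^ r + (∑ i ∈ s, f i) ^ r :=
          aux16_two_rpow _ _ _ h1 (Finset.sum_nonneg h2) hr0.le hr1
      _ ≤ (f a) ^ r + ∑ i ∈ s, f i ^ r := by gcongr; exact ih h2

/-- Gluing a finite word in front of an infinite sequence. -/
def glue {A : Type*} (m : ℕ) (w : Fin m → A) (x : ℕ → A) : ℕ → A :=
  fun i => if h : i < m then w ⟨i, h⟩ else x (i - m)

lemma glue_lt {A : Type*} {m : ℕ} {w : Fin m → A} {x : ℕ → A} {i : ℕ} (h : i < m) :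
    glue m w x i = w ⟨i, h⟩ := dif_pos h

lemma glue_add {A : Type*} {m : ℕ} {w : Fin m → A} {x : ℕ → A} (j : ℕ) :
    glue m w x (m + j) = x j := by
  have h : ¬ (m + j < m) := by omega
  simp only [glue, dif_neg h]
  congr 1
  omega

lemma glue_mem {A : Type*} [TopologicalSpace A] (X : Subshift A) (Tr : A → A → Prop)
    (hcar : X.carrier = {x | ∀ i : ℕ, Tr (x i) (x (i + 1))})
    {m : ℕ} {w : Fin m → A} {x : ℕ → A} (hx : x ∈ X.carrier)
    (hw : ∀ (i : ℕ) (h : i + 1 < m), Tr (w ⟨i, Nat.lt_of_succ_lt h⟩) (w ⟨i + 1, h⟩))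
    (hlast : ∀ (hm : 0 < m), Tr (w ⟨m - 1, Nat.sub_lt hm Nat.one_pos⟩) (x 0)) :
    glue m w x ∈ X.carrier := by
  rw [hcar] at hx ⊢
  intro i
  by_cases h1 : i + 1 < m
  · rw [glue_lt (Nat.lt_of_succ_lt h1), glue_lt h1]
    exact hw i h1
  by_cases h2 : i < m
  · have hi : i = m - 1 := by omega
    have hge : glue m w x (i + 1) = x 0 := by
      simp only [glue, dif_neg h1]
      congr 1
      omega
    rw [glue_lt h2, hge]
    have hm : 0 < m := by omega
    have : (⟨i, h2⟩ : Fin m) = ⟨m - 1, Nat.sub_lt hm Nat.one_pos⟩ := by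
      ext; simpa using hi
    rw [this]
    exact hlast hm
  · have e1 : glue m w x i = x (i - m) := dif_neg h2
    have e2 : glue m w x (i + 1) = x (i - m + 1) := by
      simp only [glue, dif_neg (show ¬ i + 1 < m by omega)]
      congr 1
      omega
    rw [e1, e2]
    exact hx (i - m)

lemma shift_iter_mem {A : Type*} [TopologicalSpace A] (X : Subshift A)
    {x : ℕ → A} (hx : x ∈ X.carrier) (j : ℕ) : (shiftF A)^[j] x ∈ X.carrier := by
  induction j with
  | zero => exact hx
  | succ j ih => rw [Function.iterate_succ_apply']; exact X.shift_mem _ ih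

lemma shift_iter_apply {A : Type*} (x : ℕ → A) (j i : ℕ) :
    (shiftF A)^[j] x i = x (i + j) := by
  induction j generalizing x with
  | zero => rfl
  | succ j ih =>
    rw [Function.iterate_succ_apply, ih]
    simp only [shiftF]
    ring_nf

lemma append_apply {β : Type*} {s t : ℕ} (f : Fin s → β) (g : Fin t → β) (i : Fin (s + t)) :
    Fin.append f g i = if h : (i : ℕ) < s then f ⟨i, h⟩ else g ⟨(i : ℕ) - s, by omega⟩ := by
  split_ifs with h
  · have : i = Fin.castAdd t ⟨i, h⟩ := by ext; simp
    conv_lhs => rw [this]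
    exact Fin.append_left f g _
  · have : i = Fin.natAdd s ⟨(i : ℕ) - s, by omega⟩ := by ext; simp; omega
    conv_lhs => rw [this]
    exact Fin.append_right f g _

lemma append_mk_left {β : Type*} {s t : ℕ} (f : Fin s → β) (g : Fin t → β) (j : ℕ)
    (h : j < s) (h' : j < s + t) : Fin.append f g ⟨j, h'⟩ = f ⟨j, h⟩ := by
  rw [append_apply, dif_pos h]

lemma append_mk_right {β : Type*} {s t : ℕ} (f : Fin s → β) (g : Fin t → β) (j : ℕ)
    (h : ¬ j < s) (h' : j < s + t) : Fin.append f g ⟨j, h'⟩ = g ⟨j - s, by omega⟩ := by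
  rw [append_apply, dif_neg h]

end Aux16

/-- (Lemma: connecting-word estimate. For fixed allowable words `u`, `v`
of `Y` and `k > n + 2M`, summing over all middle words `a` of length `k - n`,
`Σ_a |π⁻¹[u a v]|^{1/(α+1)} ≥ (|π⁻¹[u]| |π⁻¹[v]|)^{1/(α+1)} Σ_b |π⁻¹[b]|^{1/(α+1)}`,
the last sum being over words `b` of length `k - n - 2M`. Non-allowable words have
`|π⁻¹[·]| = 0`, so they contribute `0` to the sums.) -/
theorem statement16
    {A B : Type*}
    [Fintype A] [TopologicalSpace A] [DiscreteTopology A]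
    [MeasurableSpace A] [MeasurableSingletonClass A]
    [Fintype B] [TopologicalSpace B] [DiscreteTopology B]
    [MeasurableSpace B] [MeasurableSingletonClass B]
    (X : Subshift A) (Y : Subshift B) (π : Factor X Y)
    (hXS : IsSFT X) (hYS : IsSFT Y) (hXM : Mix X) (hYM : Mix Y)
    (M : ℕ) (hM : MixGap X M)
    (α : ℝ) (hα : 0 < α)
    (n l : ℕ) (u : Fin n → B) (v : Fin l → B) (hu : allowW Y u) (hv : allowW Y v)
    (k : ℕ) (hk : n + 2 * M < k) :
    (∑ a : Fin (k - n) → B,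
        (preCnt π (Fin.append (Fin.append u a) v) : ℝ) ^ (1 / (α + 1) : ℝ))
      ≥ ((preCnt π u : ℝ) * (preCnt π v : ℝ)) ^ (1 / (α + 1) : ℝ) *
          ∑ b : Fin (k - n - 2 * M) → B, (preCnt π b : ℝ) ^ (1 / (α + 1) : ℝ) := by
  classical
  obtain ⟨Tr, hcar⟩ := hXS
  have hp : 0 < k - n - 2 * M := by omega
  have hkp : n + 2 * M + (k - n - 2 * M) = k := by omega
  set p := k - n - 2 * M with hp_def
  have hα1 : (0:ℝ) < α + 1 := by linarith
  have hr0 : (0:ℝ) < 1 / (α + 1) := by positivity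
  have hr1 : (1:ℝ) / (α + 1) ≤ 1 := by
    rw [div_le_one hα1]; linarith
  rw [ge_iff_le]
  rcases isEmpty_or_nonempty A with hA | hA
  · have hempty : ∀ b : Fin p → B, (preCnt π b : ℝ) = 0 := by
      intro b
      haveI : IsEmpty {w : Fin p → A // allowW X w ∧ ∀ i, π.symb (w i) = b i} := by
        constructor
        rintro ⟨w, -⟩
        exact hA.elim (w ⟨0, hp⟩)
      have : preCnt π b = 0 := Nat.card_of_isEmpty
      rw [this, Nat.cast_zero]
    have hz : ∑ b : Fin p → B, (preCnt π b : ℝ) ^ (1 / (α + 1) : ℝ) = 0 :=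
      Finset.sum_eq_zero fun b _ => by rw [hempty b, Real.zero_rpow hr0.ne']
    rw [hz, mul_zero]
    exact Finset.sum_nonneg fun a _ => Real.rpow_nonneg (Nat.cast_nonneg _) _
  -- main case: `A` nonempty
  haveI : Nonempty A := hA
  have hmidlt : ∀ (j : ℕ), j < p → M + j < k - n := by omega
  let mid : (Fin (k - n) → B) → (Fin p → B) := fun a j => a ⟨M + (j : ℕ), hmidlt j j.isLt⟩
  have occ : ∀ (x : ℕ → A), x ∈ X.carrier → ∀ j : ℕ, allowW X (fun _ : Fin 1 => x j) := by
    intro x hx j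
    refine ⟨(shiftF A)^[j] x, shift_iter_mem X hx j, fun i => ?_⟩
    rw [shift_iter_apply]
    congr 1
    have := i.isLt
    omega
  have trP : ∀ (x : ℕ → A), x ∈ X.carrier → ∀ i : ℕ, Tr (x i) (x (i + 1)) := by
    intro x hx
    rw [hcar] at hx
    exact hx
  have exists_lift : ∀ (wu : Fin n → A) (wb : Fin p → A) (wv : Fin l → A),
      allowW X wu → allowW X wb → allowW X wv →
      ∃ w : Fin (n + (k - n) + l) → A,
        allowW X w ∧
        (∀ (j : ℕ) (h : j < n), w ⟨j, by omega⟩ = wu ⟨j, h⟩) ∧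
        (∀ (j : ℕ) (h : j < p), w ⟨n + M + j, by omega⟩ = wb ⟨j, h⟩) ∧
        (∀ (j : ℕ) (h : j < l), w ⟨k + j, by omega⟩ = wv ⟨j, h⟩) := by
    intro wu wb wv hwu hwb hwv
    obtain ⟨xu, hxu_mem, hxu⟩ := hwu
    obtain ⟨xb, hxb_mem, hxb⟩ := hwb
    obtain ⟨xv, hxv_mem, hxv⟩ := hwv
    have hxu_nat : ∀ (j : ℕ) (h : j < n), xu j = wu ⟨j, h⟩ := fun j h => hxu ⟨j, h⟩
    have hxb_nat : ∀ (j : ℕ) (h : j < p), xb j = wb ⟨j, h⟩ := fun j h => hxb ⟨j, h⟩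
    have hxv_nat : ∀ (j : ℕ) (h : j < l), xv j = wv ⟨j, h⟩ := fun j h => hxv ⟨j, h⟩
    obtain ⟨c, hc_allow, hc0, hcM⟩ := hM (xu n) (xb 0) (occ xu hxu_mem n) (occ xb hxb_mem 0)
    obtain ⟨c', hc'_allow, hc'0, hc'M⟩ := hM (xb p) (xv 0) (occ xb hxb_mem p) (occ xv hxv_mem 0)
    obtain ⟨xc, hxc_mem, hxc⟩ := hc_allow
    obtain ⟨xc', hxc'_mem, hxc'⟩ := hc'_allow
    have hxc_nat : ∀ (j : ℕ) (h : j < M + 1), xc j = c ⟨j, h⟩ := fun j h => hxc ⟨j, h⟩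
    have hxc'_nat : ∀ (j : ℕ) (h : j < M + 1), xc' j = c' ⟨j, h⟩ := fun j h => hxc' ⟨j, h⟩
    have trC : ∀ (i : ℕ) (h : i + 1 < M + 1),
        Tr (c ⟨i, Nat.lt_of_succ_lt h⟩) (c ⟨i + 1, h⟩) := by
      intro i h
      have t := trP xc hxc_mem i
      rwa [hxc_nat i (Nat.lt_of_succ_lt h), hxc_nat (i + 1) h] at t
    have trC' : ∀ (i : ℕ) (h : i + 1 < M + 1),
        Tr (c' ⟨i, Nat.lt_of_succ_lt h⟩) (c' ⟨i + 1, h⟩) := by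
      intro i h
      have t := trP xc' hxc'_mem i
      rwa [hxc'_nat i (Nat.lt_of_succ_lt h), hxc'_nat (i + 1) h] at t
    let cL : Fin M → A := fun i => c ⟨(i : ℕ), Nat.lt_succ_of_lt i.isLt⟩
    let cL' : Fin M → A := fun i => c' ⟨(i : ℕ), Nat.lt_succ_of_lt i.isLt⟩
    let z1 : ℕ → A := glue M cL' xv
    let z2 : ℕ → A := glue p wb z1
    let z3 : ℕ → A := glue M cL z2
    let z : ℕ → A := glue n wu z3
    have hz1_mem : z1 ∈ X.carrier := by
      apply glue_mem X Tr hcar hxv_mem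
      · intro i h
        exact trC' i (by omega)
      · intro hm
        have h1 : c' ⟨M, Nat.lt_succ_self M⟩ = xv 0 := hc'M
        have t := trC' (M - 1) (by omega)
        have e : (⟨M - 1 + 1, by omega⟩ : Fin (M + 1)) = ⟨M, Nat.lt_succ_self M⟩ := by
          ext
          simp
          omega
        rw [e] at t
        show Tr (c' ⟨M - 1, by omega⟩) (xv 0)
        rw [← h1]
        exact t
    have hz1_0 : z1 0 = xb p := by
      by_cases hm : 0 < M
      · have e0 : z1 0 = cL' ⟨0, hm⟩ := glue_lt hm
        rw [e0]
        show c' ⟨0, Nat.lt_succ_of_lt hm⟩ = xb p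
        have e : (⟨0, Nat.lt_succ_of_lt hm⟩ : Fin (M + 1)) = 0 := by
          ext
          simp
        rw [e]
        exact hc'0
      · have hM0 : M = 0 := by omega
        have e0 : z1 0 = xv (0 - M) := dif_neg hm
        have e1 : xv (0 - M) = xv 0 := by rw [Nat.zero_sub]
        have elast : Fin.last M = 0 := by
          ext
          simp [hM0]
        rw [e0, e1, ← hc'M, elast]
        exact hc'0
    have hz2_mem : z2 ∈ X.carrier := by
      apply glue_mem X Tr hcar hz1_mem
      · intro i h
        have t := trP xb hxb_mem i
        rwa [hxb_nat i (by omega), hxb_nat (i + 1) h] at t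
      · intro hm
        show Tr (wb ⟨p - 1, Nat.sub_lt hm Nat.one_pos⟩) (z1 0)
        rw [hz1_0, ← hxb_nat (p - 1) (by omega)]
        have t := trP xb hxb_mem (p - 1)
        have e : p - 1 + 1 = p := by omega
        rwa [e] at t
    have hz2_0 : z2 0 = c (Fin.last M) := by
      have e0 : z2 0 = wb ⟨0, hp⟩ := glue_lt hp
      rw [e0, ← hxb_nat 0 hp]
      exact hcM.symm
    have hz3_mem : z3 ∈ X.carrier := by
      apply glue_mem X Tr hcar hz2_mem
      · intro i h
        exact trC i (by omega)
      · intro hm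
        rw [hz2_0]
        have t := trC (M - 1) (by omega)
        have e : (⟨M - 1 + 1, by omega⟩ : Fin (M + 1)) = Fin.last M := by
          ext
          simp [Fin.val_last]
          omega
        rw [e] at t
        exact t
    have hz3_0 : z3 0 = xu n := by
      by_cases hm : 0 < M
      · have e0 : z3 0 = cL ⟨0, hm⟩ := glue_lt hm
        rw [e0]
        show c ⟨0, Nat.lt_succ_of_lt hm⟩ = xu n
        have e : (⟨0, Nat.lt_succ_of_lt hm⟩ : Fin (M + 1)) = 0 := by
          ext
          simp
        rw [e]
        exact hc0
      · have hM0 : M = 0 := by omega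
        have e0 : z3 0 = z2 (0 - M) := dif_neg hm
        have e1 : (0 : ℕ) - M = 0 := Nat.zero_sub M
        have elast : Fin.last M = 0 := by
          ext
          simp [hM0]
        rw [e0, e1, hz2_0, elast]
        exact hc0
    have hz_mem : z ∈ X.carrier := by
      apply glue_mem X Tr hcar hz3_mem
      · intro i h
        have t := trP xu hxu_mem i
        rwa [hxu_nat i (by omega), hxu_nat (i + 1) h] at t
      · intro hm
        show Tr (wu ⟨n - 1, Nat.sub_lt hm Nat.one_pos⟩) (z3 0)
        rw [hz3_0, ← hxu_nat (n - 1) (by omega)]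
        have t := trP xu hxu_mem (n - 1)
        have e : n - 1 + 1 = n := by omega
        rwa [e] at t
    have hzb' : ∀ (j : ℕ) (h : j < p), z (n + M + j) = wb ⟨j, h⟩ := by
      intro j h
      have e : n + M + j = n + (M + j) := by omega
      rw [e]
      have e1 : z (n + (M + j)) = z3 (M + j) := glue_add (M + j)
      have e2 : z3 (M + j) = z2 j := glue_add j
      rw [e1, e2]
      exact glue_lt h
    have hzv' : ∀ (j : ℕ), z (k + j) = xv j := by
      intro j
      have e : k + j = n + (M + (p + (M + j))) := by omega
      rw [e]
      have e1 : z (n + (M + (p + (M + j)))) = z3 (M + (p + (M + j))) := glue_add _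
      have e2 : z3 (M + (p + (M + j))) = z2 (p + (M + j)) := glue_add _
      have e3 : z2 (p + (M + j)) = z1 (M + j) := glue_add _
      have e4 : z1 (M + j) = xv j := glue_add _
      rw [e1, e2, e3, e4]
    refine ⟨fun i => z (i : ℕ), ⟨z, hz_mem, fun i => rfl⟩, ?_, ?_, ?_⟩
    · intro j h
      exact glue_lt h
    · intro j h
      exact hzb' j h
    · intro j h
      show z (k + j) = wv ⟨j, h⟩
      rw [hzv' j]
      exact hxv_nat j h
  -- the counting inequality, for each middle word `b`
  have key : ∀ b : Fin p → B,
      (preCnt π u) * (preCnt π b) * (preCnt π v) ≤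
        ∑ a ∈ Finset.univ.filter (fun a => mid a = b),
          preCnt π (Fin.append (Fin.append u a) v) := by
    intro b
    set Pu := Finset.univ.filter (fun w : Fin n → A => allowW X w ∧ ∀ i, π.symb (w i) = u i)
      with hPu
    set Pb := Finset.univ.filter (fun w : Fin p → A => allowW X w ∧ ∀ i, π.symb (w i) = b i)
      with hPb
    set Pv := Finset.univ.filter (fun w : Fin l → A => allowW X w ∧ ∀ i, π.symb (w i) = v i)
      with hPv
    have cardu : preCnt π u = Pu.card := by
      rw [hPu]
      rw [show preCnt π u = Nat.card {w : Fin n → A // allowW X w ∧ ∀ i, π.symb (w i) = u i}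
        from rfl]
      rw [Nat.card_eq_fintype_card, Fintype.card_subtype]
    have cardb : preCnt π b = Pb.card := by
      rw [hPb]
      rw [show preCnt π b = Nat.card {w : Fin p → A // allowW X w ∧ ∀ i, π.symb (w i) = b i}
        from rfl]
      rw [Nat.card_eq_fintype_card, Fintype.card_subtype]
    have cardv : preCnt π v = Pv.card := by
      rw [hPv]
      rw [show preCnt π v = Nat.card {w : Fin l → A // allowW X w ∧ ∀ i, π.symb (w i) = v i}
        from rfl]
      rw [Nat.card_eq_fintype_card, Fintype.card_subtype]
    let Ta : (Fin (k - n) → B) → Finset (Fin (n + (k - n) + l) → A) := fun a =>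
      Finset.univ.filter
        (fun w => allowW X w ∧ ∀ i, π.symb (w i) = Fin.append (Fin.append u a) v i)
    have carduav : ∀ a : Fin (k - n) → B,
        preCnt π (Fin.append (Fin.append u a) v) = (Ta a).card := by
      intro a
      rw [show preCnt π (Fin.append (Fin.append u a) v) = Nat.card {w : Fin (n + (k - n) + l) → A //
        allowW X w ∧ ∀ i, π.symb (w i) = Fin.append (Fin.append u a) v i} from rfl]
      rw [Nat.card_eq_fintype_card, Fintype.card_subtype]
    let F : ((Fin n → A) × (Fin p → A) × (Fin l → A)) → (Fin (n + (k - n) + l) → A) := fun t =>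
      if h : allowW X t.1 ∧ allowW X t.2.1 ∧ allowW X t.2.2 then
        (exists_lift t.1 t.2.1 t.2.2 h.1 h.2.1 h.2.2).choose
      else fun _ => Classical.arbitrary A
    have hF : ∀ t ∈ Pu ×ˢ Pb ×ˢ Pv,
        allowW X (F t) ∧
        (∀ (j : ℕ) (h : j < n), F t ⟨j, by omega⟩ = t.1 ⟨j, h⟩) ∧
        (∀ (j : ℕ) (h : j < p), F t ⟨n + M + j, by omega⟩ = t.2.1 ⟨j, h⟩) ∧
        (∀ (j : ℕ) (h : j < l), F t ⟨k + j, by omega⟩ = t.2.2 ⟨j, h⟩) := by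
      intro t ht
      simp only [Finset.mem_product, hPu, hPb, hPv, Finset.mem_filter] at ht
      have hcond : allowW X t.1 ∧ allowW X t.2.1 ∧ allowW X t.2.2 :=
        ⟨ht.1.2.1, ht.2.1.2.1, ht.2.2.2.1⟩
      have e : F t = (exists_lift t.1 t.2.1 t.2.2 hcond.1 hcond.2.1 hcond.2.2).choose :=
        dif_pos hcond
      rw [e]
      exact (exists_lift t.1 t.2.1 t.2.2 hcond.1 hcond.2.1 hcond.2.2).choose_spec
    have hmem : ∀ t ∈ Pu ×ˢ Pb ×ˢ Pv,
        (allowW X t.1 ∧ ∀ i, π.symb (t.1 i) = u i) ∧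
        (allowW X t.2.1 ∧ ∀ i, π.symb (t.2.1 i) = b i) ∧
        (allowW X t.2.2 ∧ ∀ i, π.symb (t.2.2 i) = v i) := by
      intro t ht
      simp only [Finset.mem_product, hPu, hPb, hPv, Finset.mem_filter] at ht
      exact ⟨ht.1.2, ht.2.1.2, ht.2.2.2⟩
    have hmaps : ∀ t ∈ Pu ×ˢ Pb ×ˢ Pv,
        F t ∈ (Finset.univ.filter (fun a => mid a = b)).biUnion Ta := by
      intro t ht
      obtain ⟨hallow, hrec1, hrec2, hrec3⟩ := hF t ht
      obtain ⟨htu, htb, htv⟩ := hmem t ht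
      rw [Finset.mem_biUnion]
      refine ⟨fun j : Fin (k - n) => π.symb (F t ⟨n + (j : ℕ), by omega⟩), ?_, ?_⟩
      · rw [Finset.mem_filter]
        refine ⟨Finset.mem_univ _, ?_⟩
        funext j
        show π.symb (F t ⟨n + (M + (j : ℕ)), by omega⟩) = b j
        calc π.symb (F t ⟨n + (M + (j : ℕ)), by omega⟩)
            = π.symb (F t ⟨n + M + (j : ℕ), by omega⟩) := by
              congr 1
              apply congrArg
              ext
              simp
              omega
          _ = π.symb (t.2.1 ⟨(j : ℕ), j.isLt⟩) := by rw [hrec2 (j : ℕ) j.isLt]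
          _ = b j := htb.2 j
      · show F t ∈ Finset.univ.filter _
        rw [Finset.mem_filter]
        refine ⟨Finset.mem_univ _, hallow, ?_⟩
        intro i
        by_cases h1 : (i : ℕ) < n
        · have e1 : Fin.append (Fin.append u (fun j : Fin (k - n) =>
              π.symb (F t ⟨n + (j : ℕ), by omega⟩))) v i
              = Fin.append u (fun j : Fin (k - n) =>
                π.symb (F t ⟨n + (j : ℕ), by omega⟩)) ⟨(i : ℕ), by omega⟩ :=
            append_mk_left _ _ _ (by omega) i.isLt
          have e2 : Fin.append u (fun j : Fin (k - n) =>
              π.symb (F t ⟨n + (j : ℕ), by omega⟩)) ⟨(i : ℕ), by omega⟩ = u ⟨(i : ℕ), h1⟩ :=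
            append_mk_left _ _ _ h1 (by omega)
          rw [e1, e2]
          calc π.symb (F t i) = π.symb (t.1 ⟨(i : ℕ), h1⟩) :=
                congrArg π.symb (hrec1 (i : ℕ) h1)
            _ = u ⟨(i : ℕ), h1⟩ := htu.2 ⟨(i : ℕ), h1⟩
        · by_cases h2 : (i : ℕ) < n + (k - n)
          · have e1 : Fin.append (Fin.append u (fun j : Fin (k - n) =>
                π.symb (F t ⟨n + (j : ℕ), by omega⟩))) v i
                = Fin.append u (fun j : Fin (k - n) =>
                  π.symb (F t ⟨n + (j : ℕ), by omega⟩)) ⟨(i : ℕ), h2⟩ :=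
              append_mk_left _ _ _ h2 i.isLt
            have e2 : Fin.append u (fun j : Fin (k - n) =>
                π.symb (F t ⟨n + (j : ℕ), by omega⟩)) ⟨(i : ℕ), h2⟩
                = π.symb (F t ⟨n + ((i : ℕ) - n), by omega⟩) :=
              append_mk_right _ _ _ h1 h2
            rw [e1, e2]
            congr 1
            apply congrArg
            ext
            simp
            omega
          · have e1 : Fin.append (Fin.append u (fun j : Fin (k - n) =>
                π.symb (F t ⟨n + (j : ℕ), by omega⟩))) v i
                = v ⟨(i : ℕ) - (n + (k - n)), by omega⟩ :=
              append_mk_right _ _ _ h2 i.isLt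
            rw [e1]
            have hlt : (i : ℕ) - k < l := by
              have := i.isLt
              omega
            calc π.symb (F t i) = π.symb (F t ⟨k + ((i : ℕ) - k), by omega⟩) := by
                  congr 1
                  apply congrArg
                  ext
                  simp
                  omega
              _ = π.symb (t.2.2 ⟨(i : ℕ) - k, hlt⟩) :=
                  congrArg π.symb (hrec3 ((i : ℕ) - k) hlt)
              _ = v ⟨(i : ℕ) - k, hlt⟩ := htv.2 ⟨(i : ℕ) - k, hlt⟩
              _ = v ⟨(i : ℕ) - (n + (k - n)), by omega⟩ := by
                  congr 1
                  ext
                  simp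
                  omega
    have hinj : Set.InjOn F ↑(Pu ×ˢ Pb ×ˢ Pv) := by
      intro t ht t' ht' he
      obtain ⟨_, r1, r2, r3⟩ := hF t (Finset.mem_coe.mp ht)
      obtain ⟨_, r1', r2', r3'⟩ := hF t' (Finset.mem_coe.mp ht')
      rw [he] at r1 r2 r3
      have e1 : t.1 = t'.1 :=
        funext fun j => ((r1 (j : ℕ) j.isLt).symm.trans (r1' (j : ℕ) j.isLt))
      have e2 : t.2.1 = t'.2.1 :=
        funext fun j => ((r2 (j : ℕ) j.isLt).symm.trans (r2' (j : ℕ) j.isLt))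
      have e3 : t.2.2 = t'.2.2 :=
        funext fun j => ((r3 (j : ℕ) j.isLt).symm.trans (r3' (j : ℕ) j.isLt))
      exact Prod.ext e1 (Prod.ext e2 e3)
    calc preCnt π u * preCnt π b * preCnt π v
        = (Pu ×ˢ Pb ×ˢ Pv).card := by
          rw [cardu, cardb, cardv, Finset.card_product, Finset.card_product]
          ring
      _ ≤ ((Finset.univ.filter (fun a => mid a = b)).biUnion Ta).card :=
          Finset.card_le_card_of_injOn F hmaps hinj
      _ ≤ ∑ a ∈ Finset.univ.filter (fun a => mid a = b), (Ta a).card :=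
          Finset.card_biUnion_le
      _ = ∑ a ∈ Finset.univ.filter (fun a => mid a = b),
            preCnt π (Fin.append (Fin.append u a) v) := by
          apply Finset.sum_congr rfl
          intro a _
          exact (carduav a).symm
  -- conclusion
  calc ((preCnt π u : ℝ) * (preCnt π v : ℝ)) ^ (1 / (α + 1) : ℝ) *
        ∑ b : Fin p → B, (preCnt π b : ℝ) ^ (1 / (α + 1) : ℝ)
      = ∑ b : Fin p → B, ((preCnt π u : ℝ) * (preCnt π v : ℝ)) ^ (1 / (α + 1) : ℝ) *
          (preCnt π b : ℝ) ^ (1 / (α + 1) : ℝ) := Finset.mul_sum _ _ _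
    _ = ∑ b : Fin p → B,
          ((preCnt π u : ℝ) * (preCnt π v : ℝ) * (preCnt π b : ℝ)) ^ (1 / (α + 1) : ℝ) := by
        apply Finset.sum_congr rfl
        intro b _
        have h1 : ((preCnt π u : ℝ) * (preCnt π v : ℝ) * (preCnt π b : ℝ)) ^ (1 / (α + 1) : ℝ)
            = ((preCnt π u : ℝ) * (preCnt π v : ℝ)) ^ (1 / (α + 1) : ℝ) *
              (preCnt π b : ℝ) ^ (1 / (α + 1) : ℝ) :=
          Real.mul_rpow (by positivity) (by positivity)
        rw [h1]
    _ ≤ ∑ b : Fin p → B,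
          (∑ a ∈ Finset.univ.filter (fun a => mid a = b),
            (preCnt π (Fin.append (Fin.append u a) v) : ℝ)) ^ (1 / (α + 1) : ℝ) := by
        apply Finset.sum_le_sum
        intro b _
        apply Real.rpow_le_rpow (by positivity) ?_ hr0.le
        have hc : ((preCnt π u * preCnt π b * preCnt π v : ℕ) : ℝ) ≤
            ((∑ a ∈ Finset.univ.filter (fun a => mid a = b),
              preCnt π (Fin.append (Fin.append u a) v) : ℕ) : ℝ) := Nat.cast_le.mpr (key b)
        push_cast at hc
        calc (preCnt π u : ℝ) * (preCnt π v : ℝ) * (preCnt π b : ℝ)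
            = (preCnt π u : ℝ) * (preCnt π b : ℝ) * (preCnt π v : ℝ) := by ring
          _ ≤ _ := hc
    _ ≤ ∑ b : Fin p → B, ∑ a ∈ Finset.univ.filter (fun a => mid a = b),
          (preCnt π (Fin.append (Fin.append u a) v) : ℝ) ^ (1 / (α + 1) : ℝ) := by
        apply Finset.sum_le_sum
        intro b _
        exact aux16_sum_rpow _ _ (fun a _ => Nat.cast_nonneg _) hr0 hr1
    _ = ∑ a : Fin (k - n) → B,
          (preCnt π (Fin.append (Fin.append u a) v) : ℝ) ^ (1 / (α + 1) : ℝ) :=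
        Finset.sum_fiberwise_of_maps_to (fun a _ => Finset.mem_univ (mid a)) _
end Paper
end
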